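/- arXiv:1807.01260 — 2 statements merged into one kernel-verified Lean document; each statement's English description precedes it below -/
import Mathlib

section
/- (Merge diameter lemma.) Let T be a tree with a cost c(y) associated with each vertex y. Let c_1, …, c_ℓ be ℓ vertex-cost functions and k_1, …, k_ℓ be ℓ constants such that, for every vertex y ∈ V(T), c(y) = max_{i=1,…,ℓ} (c_i(y) + k_i). For every i = 1, …, ℓ, let a_i, b_i be the two endpoints of a diametral path of T w.r.t. the cost function c_i. Then there exist indices i, j ∈ {1, …, ℓ} (possibly i = j) and vertices a ∈ {a_i, b_i} and b ∈ {a_j, b_j} such that: (1) a and b are the two endpoints of a diametral path of T w.r.t. c; (2) c(a) = c_i(a) + k_i; and (3) c(b) = c_j(b) + k_j. -/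
/-!
If `(a, b)` is diametral for a cost `f` on a tree, the four-point condition
`d(u, v) + d(a, b) ≤ max (d(u, a) + d(v, b)) (d(u, b) + d(v, a))` yields
`f u + d(u, v) ≤ max (f a + d(a, v)) (f b + d(b, v))` for all `u, v`.
Take a diametral pair `(a₀, b₀)` for `c = maxᵢ (cᵢ + kᵢ)` and an index `i` with
`c a₀ = cᵢ a₀ + kᵢ`. Applying this inequality to `cᵢ` replaces `a₀` by `aᵢ` or `bᵢ` without
decreasing `c a + d(a, b₀) + c b₀`, and maximality forces `c = cᵢ + kᵢ` at the new endpoint.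
Doing the same on the side of `b₀` gives the pair.
-/

namespace SimpleGraph

variable {V : Type*} {G T : SimpleGraph V} {u v w x y : V}

theorem Walk.IsPath.append {p : G.Walk u v} {q : G.Walk v w} (hp : p.IsPath) (hq : q.IsPath)
    (h : ∀ z ∈ p.support, z ∈ q.support → z = v) : (p.append q).IsPath := by
  rw [Walk.isPath_def, Walk.support_append]
  refine hp.support_nodup.append hq.support_nodup.tail fun z hzp hzq => ?_
  obtain rfl := h z hzp (List.mem_of_mem_tail hzq)
  have hnodup := hq.support_nodup
  rw [← q.cons_tail_support] at hnodup
  exact (List.nodup_cons.mp hnodup).1 hzq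

namespace IsTree

theorem length_eq_dist (hT : T.IsTree) {p : T.Walk u v} (hp : p.IsPath) :
    p.length = T.dist u v := by
  obtain ⟨q, hq, hql⟩ := hT.connected.exists_path_of_dist u v
  rw [(hT.existsUnique_path u v).unique hp hq, hql]

theorem dist_add_dist_of_mem_support (hT : T.IsTree) {p : T.Walk u v} (hp : p.IsPath)
    (hw : w ∈ p.support) : T.dist u w + T.dist w v = T.dist u v := by
  obtain ⟨q, r, hq, hr, rfl⟩ := hp.mem_support_iff_exists_append.mp hw
  rw [← hT.length_eq_dist hq, ← hT.length_eq_dist hr, ← hT.length_eq_dist hp,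
    Walk.length_append]

theorem dist_add_dist_of_mem_support_of_le (hT : T.IsTree) {p : T.Walk x y} (hp : p.IsPath)
    (hu : u ∈ p.support) (hv : v ∈ p.support) (hle : T.dist x u ≤ T.dist x v) :
    T.dist x u + T.dist u v = T.dist x v := by
  have hxu := hT.dist_add_dist_of_mem_support hp hu
  have hxv := hT.dist_add_dist_of_mem_support hp hv
  obtain ⟨q, r, hq, hr, rfl⟩ := hp.mem_support_iff_exists_append.mp hv
  rcases (Walk.mem_support_append_iff _ _).mp hu with hu | hu
  · exact hT.dist_add_dist_of_mem_support hq hu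
  · have hvuy := hT.dist_add_dist_of_mem_support hr hu
    rw [dist_comm (u := v)] at hvuy
    omega

theorem exists_median (hT : T.IsTree) {p : T.Walk x y} (hp : p.IsPath) (z : V) :
    ∃ m ∈ p.support, T.dist x z = T.dist x m + T.dist m z ∧
      T.dist y z = T.dist y m + T.dist m z := by
  classical
  -- the median is the vertex of `p` nearest to `z`
  obtain ⟨m, hm, hmin⟩ := p.support.toFinset.exists_min_image (T.dist · z) ⟨x, by simp⟩
  rw [List.mem_toFinset] at hm
  obtain ⟨q, hq, hql⟩ := hT.connected.exists_path_of_dist m z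
  have hmeet : ∀ w ∈ p.support, w ∈ q.support → w = m := by
    intro w hwp hwq
    have := hT.dist_add_dist_of_mem_support hq hwq
    have := hmin w (List.mem_toFinset.mpr hwp)
    exact (hT.connected.dist_eq_zero_iff.mp (by omega)).symm
  have hvia : ∀ {s} (r : T.Walk s m), r.IsPath → (∀ w ∈ r.support, w ∈ p.support) →
      T.dist s z = T.dist s m + T.dist m z := fun r hr hsub => by
    rw [← hT.length_eq_dist (hr.append hq fun w hw => hmeet w (hsub w hw)),
      Walk.length_append, hT.length_eq_dist hr, hql]
  refine ⟨m, hm, hvia _ (hp.takeUntil hm) fun w hw => p.support_takeUntil_subset_support hm hw,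
    hvia _ (hp.dropUntil hm).reverse fun w hw => ?_⟩
  rw [Walk.support_reverse, List.mem_reverse] at hw
  exact p.support_dropUntil_subset_support hm hw

theorem dist_add_dist_le_max (hT : T.IsTree) (u v x y : V) :
    T.dist u v + T.dist x y ≤ max (T.dist u x + T.dist v y) (T.dist u y + T.dist v x) := by
  obtain ⟨p, hp, -⟩ := hT.connected.exists_path_of_dist x y
  obtain ⟨mu, hmu, hxu, hyu⟩ := hT.exists_median hp u
  obtain ⟨mv, hmv, hxv, hyv⟩ := hT.exists_median hp v
  have hu := hT.dist_add_dist_of_mem_support hp hmu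
  have hv := hT.dist_add_dist_of_mem_support hp hmv
  have huv : T.dist u v ≤ T.dist u mu + T.dist mu mv + T.dist mv v :=
    (hT.connected.dist_triangle (v := mu)).trans (by
      have := hT.connected.dist_triangle (u := mu) (v := mv) (w := v)
      omega)
  rcases le_total (T.dist x mu) (T.dist x mv) with hle | hle
  · have := hT.dist_add_dist_of_mem_support_of_le hp hmu hmv hle
    grind [dist_comm]
  · have := hT.dist_add_dist_of_mem_support_of_le hp hmv hmu hle
    grind [dist_comm]

theorem add_dist_le_max_of_le (hT : T.IsTree) {a b : V} {fu fa fb : ℝ}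
    (ha : fu + T.dist u a ≤ fb + T.dist a b) (hb : fu + T.dist u b ≤ fa + T.dist a b) (v : V) :
    fu + T.dist u v ≤ max (fa + T.dist a v) (fb + T.dist b v) := by
  have h4 : (T.dist u v + T.dist a b : ℝ) ≤
      max (T.dist u a + T.dist v b : ℝ) (T.dist u b + T.dist v a) := by
    exact_mod_cast hT.dist_add_dist_le_max u v a b
  rw [dist_comm (u := v), dist_comm (u := v)] at h4
  rcases le_max_iff.mp h4 with h | h
  · exact le_max_of_le_right (by linarith)
  · exact le_max_of_le_left (by linarith)

end IsTree

def IsDiametral (T : SimpleGraph V) (f : V → EReal) (a b : V) : Prop :=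
  ∀ x y, f x + ((T.dist x y : ℝ) : EReal) + f y ≤ f a + ((T.dist a b : ℝ) : EReal) + f b

theorem exists_isDiametral [Finite V] [Nonempty V] (T : SimpleGraph V) (f : V → EReal) :
    ∃ a b, IsDiametral T f a b := by
  obtain ⟨⟨a, b⟩, h⟩ :=
    Finite.exists_max fun p : V × V => f p.1 + ((T.dist p.1 p.2 : ℝ) : EReal) + f p.2
  exact ⟨a, b, fun x y => h (x, y)⟩

namespace IsDiametral

variable {f : V → EReal} {a b : V}

theorem symm (h : IsDiametral T f a b) : IsDiametral T f b a := by
  have hrev : ∀ s t : V, f s + ((T.dist s t : ℝ) : EReal) + f t =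
      f t + ((T.dist t s : ℝ) : EReal) + f s := fun s t => by
    rw [dist_comm]
    abel
  intro x y
  rw [hrev x y, hrev b a]
  exact h y x

theorem add_const (h : IsDiametral T f a b) (r : ℝ) :
    IsDiametral T (fun y => f y + r) a b := by
  intro x y
  have hshift : ∀ s t : V, f s + r + ((T.dist s t : ℝ) : EReal) + (f t + r) =
      f s + ((T.dist s t : ℝ) : EReal) + f t + (r + r) := fun _ _ => by abel
  rw [hshift, hshift]
  exact add_le_add_left (h x y) _

theorem ne_bot (h : IsDiametral T f a b) (hy : f y ≠ ⊥) : f a ≠ ⊥ ∧ f b ≠ ⊥ := by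
  have hyy : f y + ((T.dist y y : ℝ) : EReal) + f y ≠ ⊥ := by simp [hy]
  have := ne_bot_of_le_ne_bot hyy (h y y)
  simp only [EReal.add_ne_bot_iff] at this
  exact ⟨this.1.1, this.2⟩

theorem add_dist_le_max (hT : T.IsTree) (hf : ∀ y, f y ≠ ⊤) (h : IsDiametral T f a b)
    (u v : V) : f u + ((T.dist u v : ℝ) : EReal) ≤
      max (f a + ((T.dist a v : ℝ) : EReal)) (f b + ((T.dist b v : ℝ) : EReal)) := by
  rcases eq_or_ne (f u) ⊥ with hu | hu
  · simp [hu]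
  obtain ⟨ha, hb⟩ := h.ne_bot hu
  have hua := h u a
  have hub := h u b
  rw [← EReal.coe_toReal (hf u) hu, ← EReal.coe_toReal (hf a) ha,
    ← EReal.coe_toReal (hf b) hb] at hua hub ⊢
  norm_cast at hua hub ⊢
  rw [← EReal.coe_strictMono.monotone.map_max, EReal.coe_le_coe_iff]
  refine hT.add_dist_le_max_of_le ?_ ?_ v <;> linarith

theorem exists_left_mem_of_eq_iSup {ι : Type*} [Finite ι] [Nonempty ι] (hT : T.IsTree)
    {g : ι → V → EReal} (hg : ∀ i y, g i y ≠ ⊤) {c : V → EReal} (hc : ∀ y, c y = ⨆ i, g i y)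
    {A B : ι → V} (hAB : ∀ i, IsDiametral T (g i) (A i) (B i)) (h : IsDiametral T c a b) :
    ∃ i, ∃ a' ∈ ({A i, B i} : Set V), IsDiametral T c a' b ∧ c a' = g i a' := by
  have hle : ∀ i y, g i y ≤ c y := fun i y => (hc y).symm ▸ le_iSup (g · y) i
  have hattained : ∀ y, ∃ i, c y = g i y := fun y => by
    obtain ⟨i, hi⟩ := exists_eq_ciSup_of_finite (f := (g · y))
    exact ⟨i, (hc y).trans hi.symm⟩
  obtain ⟨i, hia⟩ := hattained a
  obtain ⟨a', ha', hga'⟩ : ∃ a' ∈ ({A i, B i} : Set V),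
      g i a + ((T.dist a b : ℝ) : EReal) ≤ g i a' + ((T.dist a' b : ℝ) : EReal) := by
    rcases le_max_iff.mp ((hAB i).add_dist_le_max hT (hg i) a b) with h' | h'
    exacts [⟨A i, Or.inl rfl, h'⟩, ⟨B i, Or.inr rfl, h'⟩]
  have hup : c a + ((T.dist a b : ℝ) : EReal) + c b ≤
      g i a' + ((T.dist a' b : ℝ) : EReal) + c b := by
    rw [hia]
    gcongr
  have hca' : c a' ≤ g i a' := by
    rcases eq_or_ne (c b) ⊥ with hb | hb
    · have : c a' = ⊥ := by
        by_contra hne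
        exact (h.ne_bot hne).2 hb
      simp [this]
    · obtain ⟨j, hj⟩ := hattained b
      have hcb := EReal.coe_toReal (hj ▸ hg j b) hb
      have := (h a' b).trans hup
      rw [← hcb, add_assoc, add_assoc, ← EReal.coe_add] at this
      exact (EReal.addLECancellable_coe _).add_le_add_iff_right.mp this
  refine ⟨i, a', ha', fun x y => (h x y).trans (hup.trans ?_), le_antisymm hca' (hle i a')⟩
  gcongr
  exact hle i a'

end IsDiametral

end SimpleGraph

open SimpleGraph

/-- **Merge diameter lemma.** Let `c(y) = max_i (c_i(y) + k_i)` for vertex-cost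
functions `c_1, …, c_ℓ` and constants `k_1, …, k_ℓ`, and let `a_i, b_i` be the endpoints of
a diametral path of `T` w.r.t. `c_i`. Then there are indices `i, j` and vertices
`a ∈ {a_i, b_i}`, `b ∈ {a_j, b_j}` such that `a, b` are the endpoints of a diametral path
of `T` w.r.t. `c`, `c(a) = c_i(a) + k_i` and `c(b) = c_j(b) + k_j`. -/
theorem stmt_5 {V : Type*} [Fintype V] [Nonempty V] (T : SimpleGraph V) (hT : T.IsTree)
    (ℓ : ℕ) (hℓ : 0 < ℓ)
    (cf : Fin ℓ → V → EReal) (hcfTop : ∀ i y, cf i y ≠ ⊤)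
    (k : Fin ℓ → ℝ)
    (c : V → EReal) (hc : ∀ y : V, c y = ⨆ i : Fin ℓ, (cf i y + (k i : EReal)))
    (A B : Fin ℓ → V)
    (hAB : ∀ i : Fin ℓ, ∀ a b : V,
      cf i a + ((T.dist a b : ℝ) : EReal) + cf i b ≤
        cf i (A i) + ((T.dist (A i) (B i) : ℝ) : EReal) + cf i (B i)) :
    ∃ i j : Fin ℓ, ∃ a ∈ ({A i, B i} : Set V), ∃ b ∈ ({A j, B j} : Set V),
      (∀ a' b' : V, c a' + ((T.dist a' b' : ℝ) : EReal) + c b' ≤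
        c a + ((T.dist a b : ℝ) : EReal) + c b) ∧
      c a = cf i a + (k i : EReal) ∧
      c b = cf j b + (k j : EReal) := by
  have : Nonempty (Fin ℓ) := ⟨⟨0, hℓ⟩⟩
  have hgTop : ∀ i y, cf i y + (k i : EReal) ≠ ⊤ := fun i y =>
    EReal.add_ne_top (hcfTop i y) (EReal.coe_ne_top _)
  have hg : ∀ i, IsDiametral T (fun y => cf i y + k i) (A i) (B i) := fun i =>
    IsDiametral.add_const (hAB i) (k i)
  obtain ⟨a₀, b₀, h₀⟩ := exists_isDiametral T c
  obtain ⟨i, a, ha, h₁, hca⟩ := h₀.exists_left_mem_of_eq_iSup hT hgTop hc hg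
  obtain ⟨j, b, hb, h₂, hcb⟩ := h₁.symm.exists_left_mem_of_eq_iSup hT hgTop hc hg
  exact ⟨i, j, a, ha, b, hb, h₂.symm, hca, hcb⟩
end

section
/- Let T be a tree, let a_1, b_1, a_2, b_2 be vertices of T, let t be a vertex lying on the path in T between a_1 and b_1, and let t' be a vertex lying on the path in T between a_2 and b_2. Then there exist ā ∈ {a_1, b_1} and b̂ ∈ {a_2, b_2} such that d_T(ā, b̂) = d_T(ā, t) + d_T(t, t') + d_T(t', b̂), i.e., the path in T from ā to b̂ passes through t and then through t'. -/
open SimpleGraph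

/-- `mid` lies on the (unique) path between `u` and `v` in the tree `T`. -/
def OnPath {V : Type*} (T : SimpleGraph V) (u mid v : V) : Prop :=
  T.dist u mid + T.dist mid v = T.dist u v

/-!
In a tree, `OnPath T u t v` says exactly that `t` is a vertex of the path from `u` to `v`.
Given any `w`, the walk from `a` to `w` and on to `b` contains the path from `a` to `b`, so a
vertex `t` of that path lies on the path from `a` to `w` or on the one from `w` to `b`.
Applying this first to `t` with `w = t'`, then to `t'` with `w` the endpoint just chosen,
gives endpoints `ā`, `b̂` with `t` on `[ā, t']` and `t'` on `[ā, b̂]`.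
-/

lemma OnPath.symm {V : Type*} {G : SimpleGraph V} {u t v : V} (h : OnPath G u t v) :
    OnPath G v t u := by
  unfold OnPath at *
  rw [dist_comm, add_comm, dist_comm (u := t), h, dist_comm]

namespace SimpleGraph

variable {V : Type*} {G : SimpleGraph V}

lemma IsAcyclic.length_eq_dist_of_isPath (hG : G.IsAcyclic) {u v : V} {p : G.Walk u v}
    (hp : p.IsPath) : p.length = G.dist u v := by
  obtain ⟨q, hq, hlen⟩ := p.reachable.exists_path_of_dist
  have hpq : (⟨p, hp⟩ : G.Path u v) = ⟨q, hq⟩ := (hG.subsingleton_path u v).elim _ _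
  rw [← hlen, show p = q from congrArg Subtype.val hpq]

lemma IsTree.onPath_iff_mem_support (hG : G.IsTree) {u t v : V} {p : G.Walk u v}
    (hp : p.IsPath) : OnPath G u t v ↔ t ∈ p.support := by
  classical
  constructor
  · intro ht
    obtain ⟨q, -, hq⟩ := hG.connected.exists_path_of_dist u t
    obtain ⟨r, -, hr⟩ := hG.connected.exists_path_of_dist t v
    have hqr : (q.append r).IsPath :=
      (q.append r).isPath_of_length_eq_dist (by rw [Walk.length_append, hq, hr]; exact ht)
    obtain ⟨_, -, huniq⟩ := hG.existsUnique_path u v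
    rw [huniq p hp, ← huniq _ hqr, Walk.mem_support_append_iff]
    exact Or.inl q.end_mem_support
  · intro ht
    have hsplit := congrArg Walk.length (p.take_spec ht)
    rwa [Walk.length_append, hG.isAcyclic.length_eq_dist_of_isPath (hp.takeUntil ht),
      hG.isAcyclic.length_eq_dist_of_isPath (hp.dropUntil ht),
      hG.isAcyclic.length_eq_dist_of_isPath hp] at hsplit

lemma IsTree.onPath_or_onPath (hG : G.IsTree) {a t b : V} (ht : OnPath G a t b) (w : V) :
    OnPath G a t w ∨ OnPath G b t w := by
  classical
  obtain ⟨p, hp, -⟩ := hG.connected.exists_path_of_dist a w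
  obtain ⟨q, hq, -⟩ := hG.connected.exists_path_of_dist w b
  have htpq : t ∈ (p.append q).support :=
    (p.append q).support_bypass_subset_support
      ((hG.onPath_iff_mem_support (p.append q).bypass_isPath).mp ht)
  rcases ((p.mem_support_append_iff q).mp htpq) with htp | htq
  · exact Or.inl ((hG.onPath_iff_mem_support hp).mpr htp)
  · exact Or.inr ((hG.onPath_iff_mem_support hq).mpr htq).symm

end SimpleGraph

theorem stmt_6_general {V : Type*} (T : SimpleGraph V) (hT : T.IsTree)
    (a₁ b₁ a₂ b₂ t t' : V)
    (ht : OnPath T a₁ t b₁) (ht' : OnPath T a₂ t' b₂) :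
    ∃ abar ∈ ({a₁, b₁} : Set V), ∃ bhat ∈ ({a₂, b₂} : Set V),
      T.dist abar bhat = T.dist abar t + T.dist t t' + T.dist t' bhat := by
  obtain ⟨abar, habar, htt'⟩ : ∃ abar ∈ ({a₁, b₁} : Set V), OnPath T abar t t' := by
    rcases hT.onPath_or_onPath ht t' with h | h
    exacts [⟨a₁, .inl rfl, h⟩, ⟨b₁, .inr rfl, h⟩]
  obtain ⟨bhat, hbhat, ht'b⟩ : ∃ bhat ∈ ({a₂, b₂} : Set V), OnPath T abar t' bhat := by
    rcases hT.onPath_or_onPath ht' abar with h | h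
    exacts [⟨a₂, .inl rfl, h.symm⟩, ⟨b₂, .inr rfl, h.symm⟩]
  refine ⟨abar, habar, bhat, hbhat, ?_⟩
  unfold OnPath at htt' ht'b
  omega

/-- If `t` lies on the path between `a₁` and `b₁` and `t'` lies on the
path between `a₂` and `b₂` in a tree `T`, then there are `ā ∈ {a₁, b₁}` and
`b̂ ∈ {a₂, b₂}` with `d_T(ā, b̂) = d_T(ā, t) + d_T(t, t') + d_T(t', b̂)`. -/
theorem stmt_6 {V : Type*} [Fintype V] (T : SimpleGraph V) (hT : T.IsTree)
    (a₁ b₁ a₂ b₂ t t' : V)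
    (ht : OnPath T a₁ t b₁) (ht' : OnPath T a₂ t' b₂) :
    ∃ abar ∈ ({a₁, b₁} : Set V), ∃ bhat ∈ ({a₂, b₂} : Set V),
      T.dist abar bhat = T.dist abar t + T.dist t t' + T.dist t' bhat :=
  stmt_6_general T hT a₁ b₁ a₂ b₂ t t' ht ht'
end
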